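/- arXiv:2203.02693 — 3 statements merged into one kernel-verified Lean document; each statement's English description precedes it below -/
import Mathlib

section
/- Let n ≥ 3 be divisible by 3 and let J := {0, 1, …, n/3 + 1} ∪ {n/3 + 2i : i ∈ {1, …, n/3}} ⊆ {0, 1, …, n}. Then there exists a subset J'' ⊆ J with |J''| = n/3 + 1, 0 ∈ J'', n ∈ J'', and mei(J'') ≤ 4. (Second claim of Lemma bigMEI2: from the combined parent and offspring population R with these first objective values, one can select a population of size N = n/3 + 1 containing both extremes with maximal empty interval at most 4, in contrast to the NSGA-II selection, which leaves an empty interval of length n/3 + 2.) -/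
/-!
Write `n = 3k`. The points `f i = max (2i) (4i - k)`, `i = 0, …, k`, run through the even
numbers `0, 2, …` of `{0, …, k + 1}` while `2i ≤ k`, and afterwards through every other point
`k + 2(2i - k)` of the arithmetic progression `k + 2, k + 4, …, 3k`. Consecutive points differ
by `2`, `3` or `4`, and `f 0 = 0`, `f k = 3k`.
-/

/-- For `a ∈ J`, the distance from `a` to the next larger element of `J`
(`0` if `a` is the maximum of `J`). -/
def gapAfter (J : Finset ℕ) (a : ℕ) : ℕ :=
  (WithTop.untopD a (J.filter (fun b => a < b)).min) - a

/-- The maximal empty interval size of `J`: listing the elements of `J` in increasing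
order as `j_1 < j_2 < … < j_m`, this is `max_{1 ≤ a ≤ m-1} (j_{a+1} - j_a)`. -/
def mei (J : Finset ℕ) : ℕ := J.sup (fun a => gapAfter J a)

open Finset

lemma gapAfter_le_of_mem {J : Finset ℕ} {a b d : ℕ} (hb : b ∈ J) (hab : a < b)
    (hbd : b ≤ a + d) : gapAfter J a ≤ d := by
  have hbF : b ∈ J.filter (a < ·) := mem_filter.mpr ⟨hb, hab⟩
  obtain ⟨v, hv⟩ := min_of_mem hbF
  have hvb : v ≤ b := min_le_of_eq hbF hv
  rw [gapAfter, hv, WithTop.untopD_coe]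
  omega

lemma gapAfter_eq_zero_of_forall_le {J : Finset ℕ} {a : ℕ} (h : ∀ b ∈ J, b ≤ a) :
    gapAfter J a = 0 := by
  have hempty : J.filter (a < ·) = ∅ :=
    filter_eq_empty_iff.mpr fun b hb => not_lt.mpr (h b hb)
  rw [gapAfter, hempty, min_empty, WithTop.untopD_top, Nat.sub_self]

lemma mei_image_range_le {f : ℕ → ℕ} (hf : StrictMono f) {k d : ℕ}
    (hstep : ∀ i < k, f (i + 1) ≤ f i + d) : mei ((range (k + 1)).image f) ≤ d := by
  refine Finset.sup_le fun a ha => ?_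
  obtain ⟨i, hi, rfl⟩ := mem_image.mp ha
  rcases Nat.lt_or_ge i k with hik | hik
  · exact gapAfter_le_of_mem (mem_image_of_mem f (mem_range.mpr (by omega)))
      (hf i.lt_succ_self) (hstep i hik)
  · refine (gapAfter_eq_zero_of_forall_le fun b hb => ?_).trans_le (Nat.zero_le d)
    obtain ⟨j, hj, rfl⟩ := mem_image.mp hb
    exact hf.monotone (by rw [mem_range] at hj; omega)

def evenThenSkip (k i : ℕ) : ℕ := max (2 * i) (4 * i - k)

lemma evenThenSkip_strictMono (k : ℕ) : StrictMono (evenThenSkip k) :=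
  strictMono_nat_of_lt_succ fun i => by unfold evenThenSkip; omega

lemma evenThenSkip_succ_le (k i : ℕ) : evenThenSkip k (i + 1) ≤ evenThenSkip k i + 4 := by
  unfold evenThenSkip; omega

lemma evenThenSkip_mem {k i : ℕ} (hi : i ≤ k) :
    evenThenSkip k i ∈ range (k + 2) ∪ (Icc 1 k).image (fun i => k + 2 * i) := by
  rcases le_or_gt (2 * i) k with h | h
  · exact mem_union_left _ (mem_range.mpr (by unfold evenThenSkip; omega))
  · exact mem_union_right _
      (mem_image.mpr ⟨2 * i - k, mem_Icc.mpr ⟨by omega, by omega⟩, by unfold evenThenSkip; omega⟩)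

/-- Second claim of Lemma `bigMEI2`: for `3 ∣ n`, from the set
`J = {0,…,n/3+1} ∪ {n/3+2i : i ∈ {1,…,n/3}} ⊆ {0,…,n}` one can select a subset
`J''` of size `n/3 + 1` containing `0` and `n` with `mei(J'') ≤ 4`. -/
theorem stmt10 (n : ℕ) (hn : 3 ≤ n) (h3 : 3 ∣ n) :
    (∀ j ∈ Finset.range (n / 3 + 2) ∪
        (Finset.Icc 1 (n / 3)).image (fun i => n / 3 + 2 * i), j ≤ n) ∧
    ∃ J'' : Finset ℕ,
      J'' ⊆ Finset.range (n / 3 + 2) ∪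
        (Finset.Icc 1 (n / 3)).image (fun i => n / 3 + 2 * i) ∧
      J''.card = n / 3 + 1 ∧ 0 ∈ J'' ∧ n ∈ J'' ∧ mei J'' ≤ 4 := by
  obtain ⟨k, rfl⟩ := h3
  have hk : 3 * k / 3 = k := by omega
  rw [hk]
  have hmono := evenThenSkip_strictMono k
  refine ⟨fun j hj => ?_, (range (k + 1)).image (evenThenSkip k), ?_, ?_, ?_, ?_, ?_⟩
  · rcases mem_union.mp hj with h | h
    · rw [mem_range] at h; omega
    · obtain ⟨i, hi, rfl⟩ := mem_image.mp h
      rw [mem_Icc] at hi; omega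
  · intro x hx
    obtain ⟨i, hi, rfl⟩ := mem_image.mp hx
    exact evenThenSkip_mem (Nat.lt_succ_iff.mp (mem_range.mp hi))
  · rw [card_image_of_injective _ hmono.injective, card_range]
  · exact mem_image.mpr ⟨0, by simp, by simp [evenThenSkip]⟩
  · exact mem_image.mpr ⟨k, by simp, by unfold evenThenSkip; omega⟩
  · exact mei_image_range_le hmono fun i _ => evenThenSkip_succ_le k i
end

section
/- Let n ≥ 7 be odd and N = (n+1)/2. For every k ∈ {1, …, N}, the number of N-element subsets T of {1, …, n−1} such that mei(S_T) ≥ k, where S_T := {0, n} ∪ ({1,…,n−1} \ T), is at most n·(2/3)^k · C(n−1, N). Equivalently, if T is chosen uniformly at random among all N-element subsets of {1,…,n−1}, then Pr[mei(S_T) ≥ k] ≤ n·(2/3)^k. (Upper tail bound of Lemma bigMEI.) -/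
/-- The set of first objective values surviving when the removed set is `T`:
`S_T = {0, n} ∪ ({1,…,n-1} \ T)`. -/
def STn (n : ℕ) (T : Finset ℕ) : Finset ℕ :=
  insert 0 (insert n ((Finset.Icc 1 (n - 1)) \ T))

open Finset

lemma exists_gap_of_le_mei {J : Finset ℕ} {k : ℕ} (hk : 0 < k) (h : k ≤ mei J) :
    ∃ a ∈ J, (∃ b ∈ J, a + k ≤ b) ∧ ∀ j ∈ J, a < j → a + k ≤ j := by
  obtain ⟨a, haJ, hgap⟩ := (Finset.le_sup_iff hk).mp h
  rcases hmin : (J.filter (a < ·)).min with _ | b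
  · rw [gapAfter, hmin] at hgap
    change k ≤ a - a at hgap
    omega
  · rw [gapAfter, hmin] at hgap
    change k ≤ b - a at hgap
    obtain ⟨hbJ, hab⟩ := mem_filter.mp (mem_of_min hmin)
    refine ⟨a, haJ, ⟨b, hbJ, by omega⟩, fun j hjJ haj => ?_⟩
    have hbj := min_le_of_eq (mem_filter.mpr ⟨hjJ, haj⟩) hmin
    omega

lemma exists_run_of_le_mei_STn {n k : ℕ} {T : Finset ℕ} (hT : T ⊆ Icc 1 (n - 1)) (hk : 0 < k)
    (h : k ≤ mei (STn n T)) : ∃ i ≤ n - k, i ∉ T ∧ Ioo i (i + k) ⊆ T := by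
  obtain ⟨a, haS, ⟨b, hbS, hab⟩, hgap⟩ := exists_gap_of_le_mei hk h
  have hbn : b ≤ n := by
    simp only [STn, mem_insert, mem_sdiff, mem_Icc] at hbS
    omega
  refine ⟨a, by omega, fun haT => ?_, fun j hj => ?_⟩
  · have := mem_Icc.mp (hT haT)
    simp only [STn, mem_insert, mem_sdiff] at haS
    rcases haS with rfl | rfl | ⟨-, haT'⟩
    · omega
    · omega
    · exact haT' haT
  · rw [mem_Ioo] at hj
    by_contra hjT
    have hjS : j ∈ STn n T :=
      mem_insert_of_mem (mem_insert_of_mem (mem_sdiff.mpr ⟨mem_Icc.mpr (by omega), hjT⟩))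
    have := hgap j hjS hj.1
    omega

lemma card_powersetCard_filter_notMem_superset_le {α : Type*} [DecidableEq α]
    (U s : Finset α) (i : α) (N : ℕ) :
    #{T ∈ powersetCard N U | i ∉ T ∧ s ⊆ T} ≤ (#(U.erase i \ s)).choose (N - #s) := by
  rw [← card_powersetCard]
  refine card_le_card_of_injOn (· \ s) (fun T hT => ?_) (fun T₁ hT₁ T₂ hT₂ heq => ?_)
  · simp only [coe_filter, mem_powersetCard, Set.mem_ofPred_eq] at hT
    obtain ⟨⟨hTU, hTcard⟩, hiT, hsT⟩ := hT
    rw [mem_coe, mem_powersetCard, card_sdiff_of_subset hsT, hTcard]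
    exact ⟨sdiff_subset_sdiff (fun x hx => mem_erase.mpr ⟨fun hxi => hiT (hxi ▸ hx), hTU hx⟩)
      le_rfl, rfl⟩
  · simp only [coe_filter, mem_powersetCard, Set.mem_ofPred_eq] at hT₁ hT₂
    rw [← sdiff_union_of_subset hT₁.2.2, ← sdiff_union_of_subset hT₂.2.2]
    exact congrArg (· ∪ s) heq

lemma card_filter_le_mei_STn_le (n N k : ℕ) (hk : 0 < k) (hkn : k ≤ n) :
    #{T ∈ powersetCard N (Icc 1 (n - 1)) | k ≤ mei (STn n T)}
      ≤ (n - k).choose (N - (k - 1)) + (n - k) * (n - k - 1).choose (N - (k - 1)) := by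
  set P := powersetCard N (Icc 1 (n - 1))
  set A : ℕ → Finset (Finset ℕ) := fun i => {T ∈ P | i ∉ T ∧ Ioo i (i + k) ⊆ T}
  have hA : ∀ i, #(A i) ≤ (#((Icc 1 (n - 1)).erase i \ Ioo i (i + k))).choose (N - (k - 1)) := by
    intro i
    have := card_powersetCard_filter_notMem_superset_le (Icc 1 (n - 1)) (Ioo i (i + k)) i N
    rwa [Nat.card_Ioo, show i + k - i - 1 = k - 1 by omega] at this
  have hA0 : #(A 0) ≤ (n - k).choose (N - (k - 1)) := by
    refine (hA 0).trans (Nat.choose_le_choose _ ?_)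
    have hsub : Ioo 0 (0 + k) ⊆ Icc 1 (n - 1) := by
      intro x hx
      simp only [mem_Ioo, mem_Icc] at hx ⊢
      omega
    rw [erase_eq_of_notMem (by simp), card_sdiff_of_subset hsub, Nat.card_Icc, Nat.card_Ioo]
    omega
  have hAsucc : ∀ i < n - k, #(A (i + 1)) ≤ (n - k - 1).choose (N - (k - 1)) := by
    intro i hi
    refine (hA (i + 1)).trans (Nat.choose_le_choose _ ?_)
    have hsub : Ioo (i + 1) (i + 1 + k) ⊆ (Icc 1 (n - 1)).erase (i + 1) := by
      intro x hx
      simp only [mem_Ioo] at hx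
      simp only [mem_erase, mem_Icc]
      omega
    rw [card_sdiff_of_subset hsub, card_erase_of_mem (by simp only [mem_Icc]; omega),
      Nat.card_Icc, Nat.card_Ioo]
    omega
  have hcover : {T ∈ P | k ≤ mei (STn n T)} ⊆ (range (n - k + 1)).biUnion A := by
    intro T hT
    obtain ⟨hTP, hTk⟩ := mem_filter.mp hT
    obtain ⟨i, hi, hiT, hrun⟩ := exists_run_of_le_mei_STn (mem_powersetCard.mp hTP).1 hk hTk
    exact mem_biUnion.mpr ⟨i, mem_range.mpr (by omega), mem_filter.mpr ⟨hTP, hiT, hrun⟩⟩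
  calc #{T ∈ P | k ≤ mei (STn n T)}
      ≤ ∑ i ∈ range (n - k + 1), #(A i) := (card_le_card hcover).trans card_biUnion_le
    _ = ∑ i ∈ range (n - k), #(A (i + 1)) + #(A 0) := sum_range_succ' _ _
    _ ≤ ∑ _i ∈ range (n - k), (n - k - 1).choose (N - (k - 1)) + (n - k).choose (N - (k - 1)) :=
        add_le_add (sum_le_sum fun i hi => hAsucc i (mem_range.mp hi)) hA0
    _ = _ := by rw [sum_const, card_range, smul_eq_mul, add_comm]

lemma succ_mul_choose_add_choose_succ {m r : ℕ} (h : r ≤ m + 1) :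
    (m + 1) * m.choose r + (m + 1).choose r = (m + 2 - r) * (m + 1).choose r := by
  rw [mul_comm, Nat.choose_mul_succ_eq, show m + 2 - r = (m + 1 - r) + 1 by omega]
  ring

lemma three_mul_choose_sub_succ_le {a b j : ℕ} (hab : 3 * b ≤ 2 * a) (hj : j < b) :
    3 * (a - (j + 1)).choose (b - (j + 1)) ≤ 2 * (a - j).choose (b - j) := by
  obtain ⟨c, hc⟩ : ∃ c, a - j = c + 1 := ⟨a - j - 1, by omega⟩
  obtain ⟨d, hd⟩ : ∃ d, b - j = d + 1 := ⟨b - j - 1, by omega⟩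
  rw [show a - (j + 1) = c by omega, show b - (j + 1) = d by omega, hc, hd]
  have hpascal := Nat.add_one_mul_choose_eq c d
  refine Nat.le_of_mul_le_mul_left ?_ (Nat.succ_pos c)
  calc (c + 1) * (3 * c.choose d) = 3 * (d + 1) * (c + 1).choose (d + 1) := by
        rw [← mul_assoc, mul_comm (c + 1), mul_assoc, hpascal]; ring
    _ ≤ 2 * (c + 1) * (c + 1).choose (d + 1) := Nat.mul_le_mul_right _ (by omega)
    _ = (c + 1) * (2 * (c + 1).choose (d + 1)) := by ring

lemma choose_sub_sub_le_two_thirds_pow {a b j : ℕ} (hab : 3 * b ≤ 2 * a) (hj : j ≤ b) :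
    ((a - j).choose (b - j) : ℝ) ≤ (2 / 3) ^ j * a.choose b := by
  induction j with
  | zero => simp
  | succ j ih =>
    have hstep : (3 * (a - (j + 1)).choose (b - (j + 1)) : ℝ) ≤ 2 * (a - j).choose (b - j) := by
      exact_mod_cast three_mul_choose_sub_succ_le hab hj
    have := ih (by omega)
    rw [pow_succ]
    nlinarith

/-- Upper tail bound of Lemma `bigMEI`: for odd `n ≥ 7`, `N = (n+1)/2`, and
`k ∈ {1,…,N}`, the number of `N`-element subsets `T` of `{1,…,n-1}` with
`mei(S_T) ≥ k` is at most `n·(2/3)^k·C(n-1, N)`. -/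
theorem stmt11 (n N : ℕ) (hn : 7 ≤ n) (hodd : Odd n) (hN : N = (n + 1) / 2)
    (k : ℕ) (hk1 : 1 ≤ k) (hkN : k ≤ N) :
    (((((Finset.Icc 1 (n - 1)).powersetCard N).filter
        (fun T => k ≤ mei (STn n T))).card : ℝ))
      ≤ (n : ℝ) * (2 / 3 : ℝ) ^ k * ((n - 1).choose N : ℝ) := by
  have hnN : n = 2 * N - 1 := by obtain ⟨m, rfl⟩ := hodd; omega
  have hsum : (n - k).choose (N - (k - 1)) + (n - k) * (n - k - 1).choose (N - (k - 1))
      = (N - 1) * (n - k).choose (N - (k - 1)) := by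
    obtain ⟨m, hm⟩ : ∃ m, n - k = m + 1 := ⟨n - k - 1, by omega⟩
    rw [hm, Nat.add_sub_cancel, add_comm, succ_mul_choose_add_choose_succ (by omega)]
    congr 1
    omega
  have hcount : (#{T ∈ powersetCard N (Icc 1 (n - 1)) | k ≤ mei (STn n T)} : ℝ)
      ≤ ((N - 1 : ℕ) : ℝ) * (n - k).choose (N - (k - 1)) := by
    exact_mod_cast (card_filter_le_mei_STn_le n N k hk1 (by omega)).trans hsum.le
  have hratio := choose_sub_sub_le_two_thirds_pow (a := n - 1) (b := N) (j := k - 1)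
    (by omega) (by omega)
  rw [show n - 1 - (k - 1) = n - k by omega] at hratio
  have hNn : ((N - 1 : ℕ) : ℝ) ≤ 2 / 3 * n := by
    rw [div_mul_eq_mul_div, le_div_iff₀ (by norm_num)]
    exact_mod_cast (show (N - 1) * 3 ≤ 2 * n by omega)
  calc _ ≤ ((N - 1 : ℕ) : ℝ) * (n - k).choose (N - (k - 1)) := hcount
    _ ≤ 2 / 3 * n * ((2 / 3) ^ (k - 1) * (n - 1).choose N) := by gcongr
    _ = n * (2 / 3) ^ (k - 1 + 1) * (n - 1).choose N := by ring
    _ = n * (2 / 3) ^ k * (n - 1).choose N := by rw [Nat.sub_add_cancel hk1]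
end

section
/- There exists n₀ ∈ ℕ such that for every odd n ≥ n₀, with N = (n+1)/2 and k = ⌊(ln n)/3⌋, the number of N-element subsets T of {1, …, n−1} such that mei(S_T) ≥ k, where S_T := {0, n} ∪ ({1,…,n−1} \ T), is at least (1 − exp(−n^{1−(ln 4)/3}/ln n) − exp(−n/6)) · C(n−1, N). Equivalently, for a uniformly random N-subset T, with probability at least 1 − exp(−n^{1−(ln 4)/3}/ln n) − exp(−n/6) the set S_T leaves an empty interval of length at least ⌊(ln n)/3⌋ on the Pareto front. (Lower bound of Lemma bigMEI: with probability 1 − exp(−Ω(n^{1/2})), mei(P_{t+1}) ≥ ⌊(ln n)/3⌋.) -/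
/-!
Cut `{1, …, n-1}` into `m = ⌊(n-1)/L⌋` consecutive blocks of length `L = k - 1`. If `T` contains
a whole block, `S_T` has a gap of length `L + 1 = k` around it. Hence every `T` with
`mei(S_T) < k` misses a point of each block, and there are at most
`(2^L - 1)^m · 2^(n-1-mL) ≤ exp(-m/2^L) · 2^(n-1)` such subsets of `{1, …, n-1}`, of any size.
Since `2^(n-1) ≤ n · C(n-1, N)`, `2^L ≤ n^((ln 2)/3)` and `m ≳ 3n/ln n`, the exponent
`m/2^L - ln n` exceeds `n^(1-(ln 4)/3)/ln n` once `ln n ≥ 9`.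
-/

open Finset Real

lemma sub_le_gapAfter {J : Finset ℕ} {p b : ℕ} (hb : ∃ y ∈ J, b ≤ y)
    (hgap : ∀ x ∈ J, p < x → b ≤ x) : b - p ≤ gapAfter J p := by
  obtain ⟨y, hyJ, hby⟩ := hb
  rcases le_or_gt b p with hbp | hpb
  · simp [Nat.sub_eq_zero_of_le hbp]
  obtain ⟨c, hc⟩ := Finset.min_of_nonempty ⟨y, mem_filter.2 ⟨hyJ, hpb.trans_le hby⟩⟩
  obtain ⟨hcJ, hpc⟩ := mem_filter.1 (mem_of_min hc)
  rw [gapAfter, hc, WithTop.untopD_coe]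
  have := hgap c hcJ hpc
  omega

lemma sub_le_mei {J : Finset ℕ} {a b : ℕ} (ha : ∃ x ∈ J, x ≤ a) (hb : ∃ y ∈ J, b ≤ y)
    (hgap : ∀ x ∈ J, a < x → b ≤ x) : b - a ≤ mei J := by
  obtain ⟨x, hxJ, hxa⟩ := ha
  have hne : (J.filter (· ≤ a)).Nonempty := ⟨x, mem_filter.2 ⟨hxJ, hxa⟩⟩
  obtain ⟨hpJ, hpa⟩ := mem_filter.1 (max'_mem _ hne)
  set p := (J.filter (· ≤ a)).max' hne
  have hgap_p : ∀ x ∈ J, p < x → b ≤ x := fun x hx hpx =>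
    hgap x hx <| lt_of_not_ge fun hxa => hpx.not_ge (le_max' _ x (mem_filter.2 ⟨hx, hxa⟩))
  calc b - a ≤ b - p := by omega
    _ ≤ gapAfter J p := sub_le_gapAfter hb hgap_p
    _ ≤ mei J := le_sup hpJ

lemma sub_le_mei_STn {n a b : ℕ} {T : Finset ℕ} (hbn : b ≤ n) (hT : Ioo a b ⊆ T) :
    b - a ≤ mei (STn n T) := by
  refine sub_le_mei ⟨0, by simp [STn], Nat.zero_le a⟩ ⟨n, by simp [STn], hbn⟩ fun x hx hax => ?_
  by_contra! hxb
  have hxT := hT (mem_Ioo.2 ⟨hax, hxb⟩)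
  simp only [STn, mem_insert, mem_sdiff, mem_Icc] at hx
  obtain rfl | rfl | ⟨-, hxT'⟩ := hx
  · omega
  · omega
  · exact hxT' hxT

lemma card_filter_forall_not_subset_le {ι α : Type*} [DecidableEq ι] [DecidableEq α]
    (B : ι → Finset α) (s : Finset ι) (u : Finset α) :
    #{T ∈ u.powerset | ∀ i ∈ s, ¬ B i ⊆ T} ≤
      (∏ i ∈ s, (2 ^ #(B i) - 1)) * 2 ^ #(u \ s.biUnion B) := by
  induction s using Finset.induction_on generalizing u with
  | empty => simp [card_powerset]
  | insert i s hi ih =>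
    calc #{T ∈ u.powerset | ∀ j ∈ insert i s, ¬ B j ⊆ T}
        ≤ #((B i).powerset.erase (B i) ×ˢ {T ∈ (u \ B i).powerset | ∀ j ∈ s, ¬ B j ⊆ T}) := by
          refine card_le_card_of_injOn (fun T => (T ∩ B i, T \ B i)) (fun T hT => ?_) ?_
          · simp only [mem_coe, mem_filter, mem_powerset, forall_mem_insert, mem_product,
              mem_erase] at hT ⊢
            obtain ⟨hTu, hBi, hBs⟩ := hT
            exact ⟨⟨fun h => hBi (h ▸ inter_subset_left), inter_subset_right⟩,
              sdiff_subset_sdiff hTu subset_rfl, fun j hj h => hBs j hj (h.trans sdiff_subset)⟩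
          · intro T _ T' _ h
            simp only [Prod.mk.injEq] at h
            rw [← sdiff_union_inter T (B i), ← sdiff_union_inter T' (B i), h.1, h.2]
      _ ≤ (2 ^ #(B i) - 1) * ((∏ j ∈ s, (2 ^ #(B j) - 1)) * 2 ^ #((u \ B i) \ s.biUnion B)) := by
          rw [card_product, card_erase_of_mem (mem_powerset_self _), card_powerset]
          exact Nat.mul_le_mul_left _ (ih _)
      _ = _ := by rw [prod_insert hi, biUnion_insert, sdiff_sdiff_left, mul_assoc]; rfl

lemma biUnion_range_Ioc_mul (L m : ℕ) :
    (range m).biUnion (fun i => Ioc (i * L) ((i + 1) * L)) = Ioc 0 (m * L) := by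
  induction m with
  | zero => simp
  | succ m ih =>
    rw [range_add_one, biUnion_insert, ih, union_comm,
      Ioc_union_Ioc_eq_Ioc (Nat.zero_le _) (Nat.mul_le_mul_right L m.le_succ)]

lemma card_filter_mei_STn_le (n L m : ℕ) (hmL : m * L < n) :
    #{T ∈ (Icc 1 (n - 1)).powerset | mei (STn n T) ≤ L} ≤
      (2 ^ L - 1) ^ m * 2 ^ (n - 1 - m * L) := by
  set B : ℕ → Finset ℕ := fun i => Ioc (i * L) ((i + 1) * L)
  have hblock : ∀ T, mei (STn n T) ≤ L → ∀ i ∈ range m, ¬ B i ⊆ T := by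
    intro T hT i hi hBT
    have hi : (i + 1) * L ≤ m * L := Nat.mul_le_mul_right L (mem_range.1 hi)
    have := sub_le_mei_STn (n := n) (a := i * L) (b := (i + 1) * L + 1) (by omega)
      fun x hx => hBT (mem_Ioc.2 (by rw [mem_Ioo] at hx; omega))
    rw [add_one_mul] at this
    omega
  calc #{T ∈ (Icc 1 (n - 1)).powerset | mei (STn n T) ≤ L}
      ≤ #{T ∈ (Icc 1 (n - 1)).powerset | ∀ i ∈ range m, ¬ B i ⊆ T} :=
        card_le_card (monotone_filter_right _ fun T _ => hblock T)
    _ ≤ (∏ i ∈ range m, (2 ^ #(B i) - 1)) * 2 ^ #(Icc 1 (n - 1) \ (range m).biUnion B) :=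
        card_filter_forall_not_subset_le B _ _
    _ = (2 ^ L - 1) ^ m * 2 ^ (n - 1 - m * L) := by
        have hdiff : Icc 1 (n - 1) \ Ioc 0 (m * L) = Ioc (m * L) (n - 1) := by
          ext x; simp only [mem_sdiff, mem_Icc, mem_Ioc]; omega
        rw [biUnion_range_Ioc_mul, hdiff]
        simp only [B, Nat.card_Ioc, add_one_mul, Nat.add_sub_cancel_left, prod_const, card_range]

lemma four_pow_le_succ_mul_choose {m : ℕ} (hm : 4 ≤ m) :
    4 ^ m ≤ (m + 1) * (2 * m).choose (m + 1) := by
  have hcentral : (2 * m).choose (m + 1) * (m + 1) = m.centralBinom * m := by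
    rw [Nat.centralBinom, Nat.choose_succ_right_eq, two_mul, Nat.add_sub_cancel]
  calc 4 ^ m ≤ m * m.centralBinom := (Nat.four_pow_lt_mul_centralBinom m hm).le
    _ = (m + 1) * (2 * m).choose (m + 1) := by rw [mul_comm, ← hcentral, mul_comm]

lemma two_pow_le_mul_choose {n : ℕ} (hodd : Odd n) (hn : 9 ≤ n) :
    2 ^ (n - 1) ≤ n * (n - 1).choose ((n + 1) / 2) := by
  obtain ⟨m, rfl⟩ := hodd
  have hhalf : (2 * m + 1 + 1) / 2 = m + 1 := by omega
  rw [Nat.add_sub_cancel, hhalf, pow_mul]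
  calc (2 ^ 2) ^ m ≤ (m + 1) * (2 * m).choose (m + 1) := four_pow_le_succ_mul_choose (by omega)
    _ ≤ (2 * m + 1) * (2 * m).choose (m + 1) := Nat.mul_le_mul_right _ (by omega)

lemma cast_pow_mul_two_pow_le_exp {L m r : ℕ} (hmL : m * L ≤ r) :
    (((2 ^ L - 1) ^ m * 2 ^ (r - m * L) : ℕ) : ℝ) ≤ exp (-(m / 2 ^ L)) * 2 ^ r := by
  have h2L : (0 : ℝ) < 2 ^ L := by positivity
  have hfactor : ((2 ^ L - 1 : ℕ) : ℝ) = (1 - 1 / 2 ^ L) * 2 ^ L := by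
    rw [Nat.cast_sub Nat.one_le_two_pow]; field_simp; push_cast; ring
  have hsplit : ((2 : ℝ) ^ L) ^ m * 2 ^ (r - m * L) = 2 ^ r := by
    rw [← pow_mul, ← pow_add, mul_comm L, Nat.add_sub_cancel' hmL]
  calc (((2 ^ L - 1) ^ m * 2 ^ (r - m * L) : ℕ) : ℝ)
      = (1 - 1 / 2 ^ L) ^ m * 2 ^ r := by
        rw [Nat.cast_mul, Nat.cast_pow, Nat.cast_pow, Nat.cast_ofNat, hfactor, mul_pow,
          mul_assoc, hsplit]
    _ ≤ exp (-(1 / 2 ^ L)) ^ m * 2 ^ r := by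
        gcongr
        · exact sub_nonneg.2 ((div_le_one h2L).2 (one_le_pow₀ one_le_two))
        · exact one_sub_le_exp_neg _
    _ = exp (-(m / 2 ^ L)) * 2 ^ r := by rw [← exp_nat_mul]; ring_nf

lemma sq_mul_exp_le_exp {s t : ℝ} (ht : 9 ≤ t) (hs : s ≤ t / 4) : t ^ 2 * exp s ≤ exp t := by
  have h4 := pow_div_factorial_le_exp (x := 3 * t / 4) (by positivity) 4
  have ht2 : t ^ 2 ≤ exp (3 * t / 4) := by
    have h81 : 81 ≤ t ^ 2 := by nlinarith
    norm_num [Nat.factorial] at h4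
    nlinarith [mul_nonneg (sq_nonneg t) (sub_nonneg.2 h81)]
  calc t ^ 2 * exp s ≤ exp (3 * t / 4) * exp (t / 4) := by gcongr
    _ = exp t := by rw [← exp_add]; ring_nf

lemma log_add_rpow_div_log_le {x : ℝ} (hx : exp 9 ≤ x) {L m : ℕ}
    (hLx : (L : ℝ) ≤ log x / 3) (hxm : x ≤ (m + 1) * L) :
    log x + x ^ (1 - log 4 / 3) / log x ≤ m / 2 ^ L := by
  have hx0 : 0 < x := (exp_pos 9).trans_le hx
  set t := log x with ht
  have hxt : exp t = x := exp_log hx0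
  have ht9 : 9 ≤ t := (le_log_iff_exp_le hx0).2 hx
  have htx : t ≤ x := log_le_self hx0.le
  -- `E = x ^ (log 2 / 3)`
  set E := exp (t * (log 2 / 3))
  have hE1 : 1 ≤ E := one_le_exp (by positivity)
  have hE : t * (log 2 / 3) ≤ t / 4 := by
    have := log_two_lt_d9
    nlinarith
  have h2L : (2 : ℝ) ^ L ≤ E := by
    rw [← exp_log two_pos, ← exp_nat_mul]
    exact exp_le_exp.2 (by nlinarith [log_nonneg one_le_two])
  have hrpow : x ^ (1 - log 4 / 3) = x / E ^ 2 := by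
    have hlog4 : log 4 = 2 * log 2 := by
      rw [show (4 : ℝ) = 2 ^ 2 by norm_num, log_pow, Nat.cast_ofNat]
    rw [rpow_def_of_pos hx0, ← ht, ← exp_nat_mul, ← hxt, ← exp_sub, hlog4]
    congr 1; push_cast; ring
  have hsq : t ^ 2 * E ≤ x := hxt ▸ sq_mul_exp_le_exp ht9 hE
  have hm : 3 * x / t - 1 ≤ m := by
    have : 3 * x ≤ (m + 1) * t := by nlinarith
    rw [sub_le_iff_le_add, div_le_iff₀ (by linarith)]
    linarith
  calc t + x ^ (1 - log 4 / 3) / t ≤ (3 * x / t - 1) / E := by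
        have hdiff : (3 * x / t - 1) / E - (t + x / E ^ 2 / t)
            = (3 * x * E - t * E - t ^ 2 * E ^ 2 - x) / (t * E ^ 2) := by
          field_simp; ring
        rw [hrpow, ← sub_nonneg, hdiff]
        have hsqE := mul_le_mul_of_nonneg_right hsq (by positivity : (0 : ℝ) ≤ E)
        exact div_nonneg (by nlinarith) (by positivity)
    _ ≤ m / E := by gcongr
    _ ≤ m / 2 ^ L := by gcongr

lemma card_filter_mei_STn_lt_le {n : ℕ} (hx : exp 9 ≤ (n : ℝ)) (hodd : Odd n) :
    (#{T ∈ (Icc 1 (n - 1)).powersetCard ((n + 1) / 2) | mei (STn n T) < ⌊log n / 3⌋₊} : ℝ) ≤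
      exp (-(n : ℝ) ^ ((1 : ℝ) - log 4 / 3) / log n) * (n - 1).choose ((n + 1) / 2) := by
  have hn9 : 9 ≤ n := by
    have := add_one_le_exp 9
    exact_mod_cast (by linarith : (9 : ℝ) ≤ n)
  set k := ⌊log n / 3⌋₊
  have hk2 : 2 ≤ k := Nat.le_floor <| by
    have := (le_log_iff_exp_le (by positivity)).2 hx
    push_cast; linarith
  set L := k - 1
  set m := (n - 1) / L
  have hmL : m * L < n := (Nat.div_mul_le_self (n - 1) L).trans_lt (by omega : n - 1 < n)
  have hnm : n ≤ (m + 1) * L := by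
    have : n - 1 < m * L + L := Nat.lt_div_mul_add (show 0 < L by omega)
    rw [add_one_mul]; omega
  have hLx : (L : ℝ) ≤ log n / 3 :=
    (Nat.cast_le.2 (Nat.sub_le k 1)).trans (Nat.floor_le (by positivity))
  have hsub : {T ∈ (Icc 1 (n - 1)).powersetCard ((n + 1) / 2) | mei (STn n T) < k} ⊆
      {T ∈ (Icc 1 (n - 1)).powerset | mei (STn n T) ≤ L} := fun T hT => by
    simp only [mem_filter, mem_powersetCard, mem_powerset] at hT ⊢
    exact ⟨hT.1.1, by omega⟩
  calc _ ≤ (((2 ^ L - 1) ^ m * 2 ^ (n - 1 - m * L) : ℕ) : ℝ) :=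
        mod_cast (card_le_card hsub).trans (card_filter_mei_STn_le n L m hmL)
    _ ≤ exp (-(m / 2 ^ L)) * 2 ^ (n - 1) := cast_pow_mul_two_pow_le_exp (by omega)
    _ ≤ exp (-(m / 2 ^ L)) * (n * (n - 1).choose ((n + 1) / 2)) := by
        gcongr; exact_mod_cast two_pow_le_mul_choose hodd hn9
    _ = exp (log n - m / 2 ^ L) * (n - 1).choose ((n + 1) / 2) := by
        rw [sub_eq_add_neg, exp_add, exp_log (by positivity)]; ring
    _ ≤ _ := by
        gcongr
        have := log_add_rpow_div_log_le hx hLx (by exact_mod_cast hnm)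
        rw [neg_div]; linarith

/-- Lower bound of Lemma `bigMEI`: for all sufficiently large odd `n`, with
`N = (n+1)/2` and `k = ⌊(ln n)/3⌋`, the number of `N`-element subsets `T` of
`{1,…,n-1}` with `mei(S_T) ≥ k` is at least
`(1 - exp(-n^{1-(ln 4)/3}/ln n) - exp(-n/6))·C(n-1, N)`. -/
theorem stmt14 :
    ∃ n₀ : ℕ, ∀ n : ℕ, n₀ ≤ n → Odd n → ∀ N k : ℕ, N = (n + 1) / 2 →
      k = ⌊Real.log n / 3⌋₊ →
      (1 - Real.exp (-(n : ℝ) ^ ((1 : ℝ) - Real.log 4 / 3) / Real.log n)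
          - Real.exp (-(n : ℝ) / 6)) * ((n - 1).choose N : ℝ)
        ≤ (((((Finset.Icc 1 (n - 1)).powersetCard N).filter
            (fun T => k ≤ mei (STn n T))).card : ℝ)) := by
  refine ⟨⌈exp 9⌉₊, fun n hn hodd N k hN hk => ?_⟩
  subst hN hk
  have hbad := card_filter_mei_STn_lt_le (Nat.ceil_le.1 hn) hodd
  have hsplit := card_filter_add_card_filter_not (s := (Icc 1 (n - 1)).powersetCard ((n + 1) / 2))
    (fun T => ⌊log n / 3⌋₊ ≤ mei (STn n T))
  simp only [not_le, card_powersetCard, Nat.card_Icc, Nat.add_sub_cancel] at hsplit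
  have hsplitR : (#{T ∈ (Icc 1 (n - 1)).powersetCard ((n + 1) / 2) |
      ⌊log n / 3⌋₊ ≤ mei (STn n T)} : ℝ) +
      #{T ∈ (Icc 1 (n - 1)).powersetCard ((n + 1) / 2) | mei (STn n T) < ⌊log n / 3⌋₊} =
      (n - 1).choose ((n + 1) / 2) := mod_cast hsplit
  have hC : 0 ≤ exp (-(n : ℝ) / 6) * (n - 1).choose ((n + 1) / 2) := by positivity
  linarith
end
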